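/- Let (S,+) be a commutative semigroup, let F be a finite nonempty subset of S, and let M be a piecewise syndetic subset of S. Then the set {(a,n) ∈ S × ℕ : a + n·F ⊆ M} is piecewise syndetic in the commutative semigroup S × ℕ with coordinatewise addition. -/

import Mathlib

/-- `A` is thick in an additive commutative semigroup. -/
def Thick {T : Type*} [AddCommSemigroup T] (A : Set T) : Prop :=
  ∀ E : Finset T, E.Nonempty → ∃ z : T, ∀ e ∈ E, e + z ∈ A

/-- `A` is piecewise syndetic. -/
def PiecewiseSyndetic {T : Type*} [AddCommSemigroup T] (A : Set T) : Prop :=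
  ∃ G : Finset T, G.Nonempty ∧ Thick {s : T | ∃ g ∈ G, g + s ∈ A}

/-- `pnsmul n x` is the sum of `x` with itself `n` times, for a positive integer `n`. -/
def pnsmul {S : Type*} [AddSemigroup S] (n : ℕ+) (x : S) : S :=
  Nat.rec (motive := fun _ => S) x (fun _ y => y + x) n.natPred

/-!
Work in the Stone–Čech compactification `βT`, a compact right-topological semigroup. A set is
piecewise syndetic iff it belongs to some ultrafilter lying in a minimal left ideal of `βT`.
Take such a `p ∈ L ⊆ βS` with `M ∈ p`. The maps `φₓ(a, n) = a + n·x`, `x ∈ F`, are homomorphisms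
`S × ℕ → S`; their extensions form a continuous homomorphism `θ : β(S × ℕ) → (βS)^F`. The constant
family `p̄` lies in the minimal left ideal `L^F` and, since `n = 0` is allowed, in the closed
subsemigroup `range θ`; inside `range θ` it is therefore still minimal, which yields `q` in a
minimal left ideal of `β(S × ℕ)` with `θ q = p̄`. Then `⋂ₓ φₓ⁻¹ M ∈ q` is piecewise syndetic, and
the property passes to `S × ℕ+`, which contains a translate of `S × ℕ`.
-/

open Filter Set

attribute [local instance] Ultrafilter.add Ultrafilter.addSemigroup

section LeftIdeal

variable {Y : Type*} [AddSemigroup Y] [TopologicalSpace Y]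

structure IsClosedLeftIdeal (L : Set Y) : Prop where
  nonempty : L.Nonempty
  isClosed : IsClosed L
  add_mem : ∀ u, ∀ x ∈ L, u + x ∈ L

def IsMinimalClosedLeftIdeal (L : Set Y) : Prop :=
  Minimal IsClosedLeftIdeal L

theorem IsClosedLeftIdeal.exists_minimal_subset [CompactSpace Y] {L₀ : Set Y}
    (h : IsClosedLeftIdeal L₀) : ∃ L ⊆ L₀, IsMinimalClosedLeftIdeal L := by
  refine zorn_superset_nonempty {L | IsClosedLeftIdeal L} ?_ L₀ h
  intro c hc hchain hne
  have : Nonempty c := hne.to_subtype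
  refine ⟨⋂₀ c, ⟨?_, isClosed_sInter fun U hU => (hc hU).isClosed, ?_⟩,
    fun U hU => sInter_subset_of_mem hU⟩
  · exact IsCompact.nonempty_sInter_of_directed_nonempty_isCompact_isClosed
      (fun U hU V hV => (hchain.total hU hV).elim
        (fun h => ⟨U, hU, subset_rfl, h⟩) (fun h => ⟨V, hV, h, subset_rfl⟩))
      (fun U hU => (hc hU).nonempty) (fun U hU => (hc hU).isClosed.isCompact)
      (fun U hU => (hc hU).isClosed)
  · exact fun u x hx => mem_sInter.2 fun U hU => (hc hU).add_mem u x (hx U hU)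

theorem isClosedLeftIdeal_range_add_right [CompactSpace Y] [T2Space Y]
    (hc : ∀ r : Y, Continuous (· + r)) (q : Y) : IsClosedLeftIdeal (range (· + q)) :=
  ⟨⟨q + q, mem_range_self q⟩, (isCompact_range (hc q)).isClosed,
    by rintro u _ ⟨v, rfl⟩; exact ⟨u + v, add_assoc u v q⟩⟩

theorem IsMinimalClosedLeftIdeal.of_subset_range_add {L : Set Y} (hL : IsClosedLeftIdeal L)
    (h : ∀ q ∈ L, L ⊆ range (· + q)) : IsMinimalClosedLeftIdeal L := by
  refine ⟨hL, fun L' hL' hsub => ?_⟩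
  obtain ⟨q, hq⟩ := hL'.nonempty
  rintro _ hx
  obtain ⟨u, rfl⟩ := h q (hsub hq) hx
  exact hL'.add_mem u q hq

namespace IsMinimalClosedLeftIdeal

variable [CompactSpace Y] [T2Space Y] (hc : ∀ r : Y, Continuous (· + r)) {L : Set Y}
  (hL : IsMinimalClosedLeftIdeal L)
include hc hL

theorem subset_range_add {q : Y} (hq : q ∈ L) : L ⊆ range (· + q) :=
  hL.2 (isClosedLeftIdeal_range_add_right hc q) (by
    rintro _ ⟨u, rfl⟩; exact hL.1.add_mem u q hq)

theorem exists_add_add_eq {q : Y} (hq : q ∈ L) (r : Y) : ∃ u, u + (r + q) = q :=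
  hL.subset_range_add hc (hL.1.add_mem r q hq) hq

theorem add_eq_self_of_idempotent {p : Y} (hpL : p ∈ L) (hpp : p + p = p) {q : Y} (hq : q ∈ L) :
    q + p = q := by
  obtain ⟨u, rfl⟩ := hL.subset_range_add hc hpL hq
  rw [add_assoc, hpp]

theorem exists_mem_add_add_eq_of_mem {p : Y} (hpL : p ∈ L)
    {E : AddSubsemigroup Y} (hE : IsClosed (E : Set Y)) (hpE : p ∈ E) {r : Y} (hr : r ∈ E) :
    ∃ v ∈ E, v + (r + p) = p := by
  -- An idempotent `e` of `E + (r + p)` lies in `L`, hence is a right identity for `p ∈ L`,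
  -- and then `p = p + e ∈ E + (r + p)`.
  have hrp : r + p ∈ E := E.add_mem hr hpE
  obtain ⟨_, ⟨v, hvE, rfl⟩, hidem⟩ := exists_idempotent_in_compact_add_subsemigroup hc
    ((· + (r + p)) '' E) ⟨_, mem_image_of_mem _ hpE⟩ (hE.isCompact.image (hc _)) (by
      rintro _ ⟨a, ha, rfl⟩ _ ⟨b, hb, rfl⟩
      exact ⟨a + (r + p) + b, E.add_mem (E.add_mem ha hrp) hb, by simp only [add_assoc]⟩)
  have hvL : v + (r + p) ∈ L := by rw [← add_assoc]; exact hL.1.add_mem _ p hpL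
  refine ⟨p + v, E.add_mem hpE hvE, ?_⟩
  rw [add_assoc, hL.add_eq_self_of_idempotent hc hvL hidem hpL]

end IsMinimalClosedLeftIdeal

theorem IsMinimalClosedLeftIdeal.pi {ι : Type*} {Y : ι → Type*} [∀ i, AddSemigroup (Y i)]
    [∀ i, TopologicalSpace (Y i)] [∀ i, CompactSpace (Y i)] [∀ i, T2Space (Y i)]
    (hc : ∀ i, ∀ r : Y i, Continuous (· + r)) {L : ∀ i, Set (Y i)}
    (hL : ∀ i, IsMinimalClosedLeftIdeal (L i)) : IsMinimalClosedLeftIdeal (univ.pi L) := by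
  refine .of_subset_range_add ⟨univ_pi_nonempty_iff.2 fun i => (hL i).1.nonempty,
    isClosed_set_pi fun i _ => (hL i).1.isClosed,
    fun u x hx i _ => (hL i).1.add_mem (u i) (x i) (hx i trivial)⟩ fun q hq f hf => ?_
  choose u hu using fun i => (hL i).subset_range_add (hc i) (hq i trivial) (hf i trivial)
  exact ⟨u, funext hu⟩

end LeftIdeal

namespace Ultrafilter

variable {α β : Type*}

theorem mem_add_iff [Add α] {U V : Ultrafilter α} {s : Set α} :
    s ∈ U + V ↔ {a | {b | a + b ∈ s} ∈ V} ∈ U :=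
  Iff.rfl

def mapAddHom [Add α] [Add β] (f : α →ₙ+ β) : Ultrafilter α →ₙ+ Ultrafilter β where
  toFun := map f
  map_add' U V := coe_injective <| Filter.ext fun s => by
    simp only [mem_coe, mem_map, mem_add_iff, preimage_ofPred_eq, mem_preimage, map_add]

theorem continuous_map (f : α → β) : Continuous (map f) :=
  ultrafilterBasis_is_basis.continuous_iff.2 <| forall_mem_range.2 fun s =>
    ultrafilter_isOpen_basic (f ⁻¹' s)

theorem exists_forall_mem {ι : Type*} (s : ι → Set α)
    (h : ∀ E : Finset ι, (⋂ i ∈ E, s i).Nonempty) : ∃ U : Ultrafilter α, ∀ i, s i ∈ U := by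
  classical
  have : (⨅ E : Finset ι, 𝓟 (⋂ i ∈ E, s i)).NeBot := by
    refine iInf_neBot_of_directed' (fun E₁ E₂ => ⟨E₁ ∪ E₂, ?_, ?_⟩)
      fun E => principal_neBot_iff.2 (h E)
    all_goals exact principal_mono.2 (biInter_subset_biInter_left (by simp))
  refine ⟨.of (⨅ E : Finset ι, 𝓟 (⋂ i ∈ E, s i)), fun i => of_le _ ?_⟩
  exact mem_iInf_of_mem ({i} : Finset ι) (by simp)

end Ultrafilter

section PiecewiseSyndetic

variable {T : Type*} [AddCommSemigroup T] {A : Set T}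

theorem Thick.exists_ultrafilter [Nonempty T] (hA : Thick A) :
    ∃ p : Ultrafilter T, ∀ t, {s | t + s ∈ A} ∈ p := by
  refine Ultrafilter.exists_forall_mem _ fun E => ?_
  rcases E.eq_empty_or_nonempty with rfl | hE
  · simp
  · obtain ⟨z, hz⟩ := hA E hE
    exact ⟨z, mem_iInter₂.2 hz⟩

theorem PiecewiseSyndetic.exists_mem_minimal (hA : PiecewiseSyndetic A) :
    ∃ L : Set (Ultrafilter T), IsMinimalClosedLeftIdeal L ∧ ∃ q ∈ L, A ∈ q := by
  obtain ⟨G, ⟨g, -⟩, hthick⟩ := hA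
  have : Nonempty T := ⟨g⟩
  obtain ⟨p, hp⟩ := hthick.exists_ultrafilter
  obtain ⟨L, hLp, hL⟩ :=
    (isClosedLeftIdeal_range_add_right Ultrafilter.continuous_add_left p).exists_minimal_subset
  obtain ⟨q, hq⟩ := hL.1.nonempty
  obtain ⟨u, rfl⟩ := hLp hq
  have hthick_mem : ⋃ g ∈ (G : Set T), {s | g + s ∈ A} ∈ u + p := by
    rw [Ultrafilter.mem_add_iff]
    exact univ_mem' fun t => by
      simpa only [mem_iUnion, exists_prop, mem_ofPred_eq, Finset.mem_coe] using hp t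
  obtain ⟨g₀, -, hg₀⟩ := (Ultrafilter.finite_biUnion_mem_iff G.finite_toSet).1 hthick_mem
  exact ⟨L, hL, pure g₀ + (u + p), hL.1.add_mem _ _ hq, Ultrafilter.mem_add_iff.2 hg₀⟩

namespace IsMinimalClosedLeftIdeal

variable {L : Set (Ultrafilter T)} (hL : IsMinimalClosedLeftIdeal L) {q : Ultrafilter T}
  (hq : q ∈ L)
include hL hq

theorem exists_finset_forall_mem (hA : A ∈ q) :
    ∃ G : Finset T, ∀ t, ∃ g ∈ G, {z | g + t + z ∈ A} ∈ q := by
  by_contra! h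
  obtain ⟨r, hr⟩ := Ultrafilter.exists_forall_mem (fun g => {t | {z | g + t + z ∈ A} ∉ q})
    fun G => by
      obtain ⟨t, ht⟩ := h G
      exact ⟨t, mem_iInter₂.2 ht⟩
  obtain ⟨u, hu⟩ := hL.exists_add_add_eq Ultrafilter.continuous_add_left hq r
  rw [← hu, Ultrafilter.mem_add_iff] at hA
  obtain ⟨g, hg⟩ := Ultrafilter.nonempty_of_mem hA
  obtain ⟨c, hc, hc'⟩ :=
    Ultrafilter.nonempty_of_mem (inter_mem (Ultrafilter.mem_add_iff.1 hg) (hr g))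
  exact hc' (by simpa only [mem_ofPred_eq, add_assoc] using hc)

theorem piecewiseSyndetic_of_mem (hA : A ∈ q) : PiecewiseSyndetic A := by
  obtain ⟨G, hG⟩ := hL.exists_finset_forall_mem hq hA
  obtain ⟨t, -⟩ := Ultrafilter.nonempty_of_mem hA
  refine ⟨G, ?_, fun E _ => ?_⟩
  · obtain ⟨g, hg, -⟩ := hG t
    exact ⟨g, hg⟩
  · choose g hgG hg using hG
    obtain ⟨z, hz⟩ := Ultrafilter.nonempty_of_mem ((biInter_finset_mem E).2 fun e _ => hg e)
    refine ⟨z, fun e he => ⟨g e, hgG e, ?_⟩⟩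
    rw [← add_assoc]
    exact mem_iInter₂.1 hz e he

end IsMinimalClosedLeftIdeal

theorem PiecewiseSyndetic.preimage {T' : Type*} [AddCommSemigroup T'] (hA : PiecewiseSyndetic A)
    (κ : T' →ₙ+ T) (c : T) (hc : ∀ t, c + t ∈ range κ) : PiecewiseSyndetic (κ ⁻¹' A) := by
  classical
  obtain ⟨G, hG, hthick⟩ := hA
  choose lift hlift using hc
  -- Each of the lifts of `g` and `z` below contributes one `c`, hence the shift by `c + c`.
  refine ⟨G.image lift, hG.image _, fun E hE => ?_⟩
  obtain ⟨z, hz⟩ := hthick (E.image fun e => κ e + (c + c)) (hE.image _)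
  refine ⟨lift z, fun e he => ?_⟩
  obtain ⟨g, hgG, hg⟩ := hz _ (Finset.mem_image_of_mem _ he)
  refine ⟨lift g, Finset.mem_image_of_mem _ hgG, ?_⟩
  rw [mem_preimage, map_add, map_add, hlift, hlift]
  convert hg using 1
  ac_rfl

end PiecewiseSyndetic

theorem IsMinimalClosedLeftIdeal.exists_map_eq {T S ι : Type*} [AddSemigroup T]
    [AddSemigroup S] (φ : ι → T →ₙ+ S) {L : Set (Ultrafilter S)}
    (hL : IsMinimalClosedLeftIdeal L) {p : Ultrafilter S} (hpL : p ∈ L) (w : Ultrafilter T)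
    (hw : ∀ i, w.map (φ i) = p) :
    ∃ L' : Set (Ultrafilter T), IsMinimalClosedLeftIdeal L' ∧
      ∃ q ∈ L', ∀ i, q.map (φ i) = p := by
  let θ : Ultrafilter T →ₙ+ (ι → Ultrafilter S) := AddHom.pi fun i => Ultrafilter.mapAddHom (φ i)
  have hθ : Continuous θ := continuous_pi fun i => Ultrafilter.continuous_map (φ i)
  have hθw : θ w = fun _ => p := funext hw
  have hLι : IsMinimalClosedLeftIdeal (univ.pi fun _ : ι => L) :=
    .pi (fun _ => Ultrafilter.continuous_add_left) fun _ => hL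
  obtain ⟨L', hL'w, hL'⟩ :=
    (isClosedLeftIdeal_range_add_right Ultrafilter.continuous_add_left w).exists_minimal_subset
  obtain ⟨q, hq⟩ := hL'.1.nonempty
  obtain ⟨u, rfl⟩ := hL'w hq
  have hcι : ∀ r : ι → Ultrafilter S, Continuous (· + r) := fun r =>
    continuous_pi fun i => (Ultrafilter.continuous_add_left (r i)).comp (continuous_apply i)
  obtain ⟨_, ⟨v, rfl⟩, hv⟩ := hLι.exists_mem_add_add_eq_of_mem hcι (p := fun _ => p)
    (fun _ _ => hpL) (E := θ.srange) (isCompact_range hθ).isClosed ⟨w, hθw⟩ ⟨u, rfl⟩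
  have hθv : θ (v + (u + w)) = fun _ => p := by rw [map_add, map_add, hθw]; exact hv
  exact ⟨L', hL', v + (u + w), hL'.1.add_mem v _ hq, congrFun hθv⟩

section Iterate

variable {S : Type*}

theorem iterate_add_right_add_left [AddSemigroup S] (x a b : S) (n : ℕ) :
    (· + x)^[n] (a + b) = a + (· + x)^[n] b :=
  (Function.Commute.iterate_left (fun y => add_assoc a y x) n) b

theorem iterate_add_right_add_right [AddCommSemigroup S] (x a b : S) (n : ℕ) :
    (· + x)^[n] (a + b) = (· + x)^[n] a + b :=
  (Function.Commute.iterate_left (f := (· + x)) (g := (· + b))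
    (fun y => add_right_comm y b x) n) a

theorem add_pnsmul_eq_iterate [AddSemigroup S] (n : ℕ+) (x a : S) :
    a + pnsmul n x = (· + x)^[n] a := by
  suffices h : ∀ k : ℕ, a + Nat.rec (motive := fun _ => S) x (fun _ y => y + x) k =
      (· + x)^[k + 1] a by
    simpa [pnsmul] using h n.natPred
  intro k
  induction k with
  | zero => rfl
  | succ k ih => rw [Function.iterate_succ_apply', ← ih]; exact (add_assoc _ _ _).symm

def iterateAddHom [AddCommSemigroup S] (x : S) : S × ℕ →ₙ+ S where
  toFun t := (· + x)^[t.2] t.1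
  map_add' s t := by
    rw [Prod.fst_add, Prod.snd_add, Function.iterate_add_apply, iterate_add_right_add_left,
      iterate_add_right_add_right]

theorem PiecewiseSyndetic.setOf_forall_iterate_mem [AddCommSemigroup S] {M : Set S}
    (hM : PiecewiseSyndetic M) (F : Finset S) :
    PiecewiseSyndetic {t : S × ℕ | ∀ x ∈ F, (· + x)^[t.2] t.1 ∈ M} := by
  obtain ⟨L, hL, p, hpL, hMp⟩ := hM.exists_mem_minimal
  obtain ⟨L', hL', q, hqL', hq⟩ := hL.exists_map_eq (fun x : F => iterateAddHom x.1) hpL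
    (p.map (·, 0)) fun x => by rw [Ultrafilter.map_map]; exact p.map_id
  refine hL'.piecewiseSyndetic_of_mem hqL' ?_
  have hMq : ∀ x ∈ F, iterateAddHom x ⁻¹' M ∈ q := fun x hx => by
    rw [← Ultrafilter.mem_map, hq ⟨x, hx⟩]
    exact hMp
  exact mem_of_superset ((biInter_finset_mem F).2 hMq) fun t ht x hx => mem_iInter₂.1 ht x hx

end Iterate

theorem stmt6_general {S : Type*} [AddCommSemigroup S] (F : Finset S)
    (M : Set S) (hM : PiecewiseSyndetic M) :
    PiecewiseSyndetic {p : S × ℕ+ | ∀ x ∈ F, p.1 + pnsmul p.2 x ∈ M} := by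
  obtain ⟨-, ⟨x₀, -⟩, -⟩ := id hM
  have := (hM.setOf_forall_iterate_mem F).preimage
    (AddHom.prodMap (AddHom.id S) PNat.coeAddHom) (x₀, 1)
    fun t => ⟨(x₀ + t.1, t.2.succPNat), by ext <;> simp [add_comm]⟩
  simpa [add_pnsmul_eq_iterate] using this

/-- Main theorem: if `M ⊆ S` is piecewise syndetic and `F ⊆ S` is finite nonempty,
then `{(a, n) ∈ S × ℕ⁺ : a + n·F ⊆ M}` is piecewise syndetic in `S × ℕ⁺`. -/
theorem stmt6 {S : Type*} [AddCommSemigroup S] (F : Finset S) (hF : F.Nonempty)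
    (M : Set S) (hM : PiecewiseSyndetic M) :
    PiecewiseSyndetic {p : S × ℕ+ | ∀ x ∈ F, p.1 + pnsmul p.2 x ∈ M} :=
  stmt6_general F M hM
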